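/- Let f : Xⁿ → Y be a function whose diagonal section δ_f is a lattice homomorphism. Then f is a transformed polynomial function if and only if f is a quasi-idempotent quasi-polynomial function. -/

import Mathlib

/-- Lattice polynomial functions in `n` variables on a bounded distributive lattice. -/
inductive IsLatticePolynomial {L : Type*} [DistribLattice L] [BoundedOrder L] {n : ℕ} :
    ((Fin n → L) → L) → Prop
  | proj (i : Fin n) : IsLatticePolynomial (fun x => x i)
  | const (c : L) : IsLatticePolynomial (fun _ => c)
  | inf {p q : (Fin n → L) → L} :
      IsLatticePolynomial p → IsLatticePolynomial q → IsLatticePolynomial (fun x => p x ⊓ q x)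
  | sup {p q : (Fin n → L) → L} :
      IsLatticePolynomial p → IsLatticePolynomial q → IsLatticePolynomial (fun x => p x ⊔ q x)

/-- The ternary median in a lattice. -/
def med {L : Type*} [Lattice L] (a b c : L) : L := (a ⊓ b) ⊔ (b ⊓ c) ⊔ (c ⊓ a)

/-- `f` is a quasi-polynomial function. -/
def IsQuasiPolynomial {X Y : Type*} [DistribLattice X] [BoundedOrder X]
    [DistribLattice Y] [BoundedOrder Y] {n : ℕ} (f : (Fin n → X) → Y) : Prop :=
  ∃ (p : (Fin n → Y) → Y) (φ : X → Y), IsLatticePolynomial p ∧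
    (∀ x : X, φ x = med (φ ⊥) (φ x) (φ ⊤)) ∧ (∀ x, f x = p (fun i => φ (x i)))

/-- `f` is a transformed polynomial function. -/
def IsTransformedPolynomial {X Y : Type*} [DistribLattice X] [BoundedOrder X]
    [DistribLattice Y] [BoundedOrder Y] {n : ℕ} (f : (Fin n → X) → Y) : Prop :=
  ∃ (p : (Fin n → X) → X) (ψ : X → Y), IsLatticePolynomial p ∧ f = ψ ∘ p

section Aux

variable {L : Type*} [DistribLattice L] [BoundedOrder L] {n : ℕ}

theorem IsLatticePolynomial.monotone {p : (Fin n → L) → L} (hp : IsLatticePolynomial p) :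
    Monotone p := by
  induction hp with
  | proj i => exact fun u v h => h i
  | const c => exact monotone_const
  | inf h1 h2 ih1 ih2 => exact fun u v h => inf_le_inf (ih1 h) (ih2 h)
  | sup h1 h2 ih1 ih2 => exact fun u v h => sup_le_sup (ih1 h) (ih2 h)

theorem IsLatticePolynomial.diag {p : (Fin n → L) → L} (hp : IsLatticePolynomial p) (y : L) :
    p (fun _ => y) = (p (fun _ => ⊥) ⊔ y) ⊓ p (fun _ => ⊤) := by
  induction hp with
  | proj i => simp
  | const c => rw [inf_comm]; exact (inf_sup_self).symm
  | inf h1 h2 ih1 ih2 =>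
    beta_reduce
    rw [ih1, ih2, inf_inf_inf_comm, ← sup_inf_right]
  | sup h1 h2 ih1 ih2 =>
    rename_i p1 q1
    beta_reduce
    rw [ih1, ih2]
    have hA1 : p1 (fun _ : Fin n => (⊥ : L)) ≤ p1 (fun _ => ⊤) := h1.monotone fun _ => bot_le
    have hA2 : q1 (fun _ : Fin n => (⊥ : L)) ≤ q1 (fun _ => ⊤) := h2.monotone fun _ => bot_le
    apply le_antisymm
    · apply sup_le
      · exact inf_le_inf (sup_le_sup_right le_sup_left y) le_sup_left
      · exact inf_le_inf (sup_le_sup_right le_sup_right y) le_sup_right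
    · rw [inf_sup_right, inf_sup_right]
      refine sup_le (sup_le ?_ ?_) ?_
      · exact le_sup_of_le_left (inf_le_left.trans (le_inf le_sup_left hA1))
      · exact le_sup_of_le_right (inf_le_left.trans (le_inf le_sup_left hA2))
      · rw [inf_sup_left]
        exact sup_le (le_sup_of_le_left (inf_le_inf le_sup_right le_rfl))
          (le_sup_of_le_right (inf_le_inf le_sup_right le_rfl))

/-- Interval disjunctive normal form for lattice polynomials. -/
theorem IsLatticePolynomial.dnf {p : (Fin n → L) → L} (hp : IsLatticePolynomial p)
    {a b : L} (hab : a ≤ b) (y : Fin n → L) (hya : ∀ i, a ≤ y i) (hyb : ∀ i, y i ≤ b) :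
    p y = (Finset.univ : Finset (Finset (Fin n))).sup
      (fun S => p (fun i => if i ∈ S then b else a) ⊓ S.inf y) := by
  induction hp with
  | proj i =>
    apply le_antisymm
    · have h1 : y i = a ⊔ b ⊓ y i := by
        rw [sup_inf_left, sup_eq_right.mpr (hya i)]
        exact (inf_eq_right.mpr ((hyb i).trans le_sup_right)).symm
      show y i ≤ _
      rw [h1]
      apply sup_le
      · refine le_trans ?_ (Finset.le_sup (Finset.mem_univ (∅ : Finset (Fin n))))
        simp
      · refine le_trans ?_ (Finset.le_sup (Finset.mem_univ ({i} : Finset (Fin n))))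
        simp
    · apply Finset.sup_le; intro S _
      by_cases hi : i ∈ S
      · exact inf_le_right.trans (Finset.inf_le hi)
      · refine inf_le_left.trans ?_
        show (if i ∈ S then b else a) ≤ y i
        rw [if_neg hi]; exact hya i
  | const c =>
    apply le_antisymm
    · refine le_trans ?_ (Finset.le_sup (Finset.mem_univ (∅ : Finset (Fin n))))
      simp
    · exact Finset.sup_le fun S _ => inf_le_left
  | inf h1 h2 ih1 ih2 =>
    rename_i p1 q1
    show p1 y ⊓ q1 y = _
    rw [ih1, ih2, Finset.sup_inf_sup]
    apply le_antisymm
    · apply Finset.sup_le; rintro ⟨S, T⟩ _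
      refine le_trans ?_ (Finset.le_sup (Finset.mem_univ (S ∪ T)))
      have hS : (fun i => if i ∈ S then b else a) ≤ (fun i => if i ∈ S ∪ T then b else a) := by
        intro i; dsimp only
        by_cases h : i ∈ S
        · rw [if_pos h, if_pos (Finset.mem_union_left T h)]
        · rw [if_neg h]
          split
          · exact hab
          · exact le_rfl
      have hT : (fun i => if i ∈ T then b else a) ≤ (fun i => if i ∈ S ∪ T then b else a) := by
        intro i; dsimp only
        by_cases h : i ∈ T
        · rw [if_pos h, if_pos (Finset.mem_union_right S h)]
        · rw [if_neg h]
          split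
          · exact hab
          · exact le_rfl
      calc p1 (fun i => if i ∈ S then b else a) ⊓ S.inf y ⊓
            (q1 (fun i => if i ∈ T then b else a) ⊓ T.inf y)
          = p1 (fun i => if i ∈ S then b else a) ⊓ q1 (fun i => if i ∈ T then b else a) ⊓
              (S.inf y ⊓ T.inf y) := inf_inf_inf_comm _ _ _ _
        _ ≤ p1 (fun i => if i ∈ S ∪ T then b else a) ⊓ q1 (fun i => if i ∈ S ∪ T then b else a) ⊓
              (S ∪ T).inf y := by
            rw [Finset.inf_union]
            exact inf_le_inf (inf_le_inf (h1.monotone hS) (h2.monotone hT)) le_rfl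
    · apply Finset.sup_le; intro S _
      have hmem : (S, S) ∈ Finset.univ ×ˢ (Finset.univ : Finset (Finset (Fin n))) :=
        Finset.mem_product.mpr ⟨Finset.mem_univ S, Finset.mem_univ S⟩
      refine le_trans ?_ (Finset.le_sup hmem)
      exact le_inf (inf_le_inf inf_le_left le_rfl) (inf_le_inf inf_le_right le_rfl)
  | sup h1 h2 ih1 ih2 =>
    rename_i p1 q1
    show p1 y ⊔ q1 y = _
    rw [ih1, ih2]
    apply le_antisymm
    · apply sup_le
      · apply Finset.sup_le; intro S _
        refine le_trans ?_ (Finset.le_sup (Finset.mem_univ S))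
        exact inf_le_inf le_sup_left le_rfl
      · apply Finset.sup_le; intro S _
        refine le_trans ?_ (Finset.le_sup (Finset.mem_univ S))
        exact inf_le_inf le_sup_right le_rfl
    · apply Finset.sup_le; intro S _
      show (p1 _ ⊔ q1 _) ⊓ S.inf y ≤ _
      rw [inf_sup_right]
      refine sup_le (le_sup_of_le_left ?_) (le_sup_of_le_right ?_)
      · exact Finset.le_sup (f := fun S => p1 (fun i => if i ∈ S then b else a) ⊓ S.inf y)
          (Finset.mem_univ S)
      · exact Finset.le_sup (f := fun S => q1 (fun i => if i ∈ S then b else a) ⊓ S.inf y)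
          (Finset.mem_univ S)

/-- Clipping the arguments of a polynomial between its diagonal extreme values
does not change its value. -/
theorem IsLatticePolynomial.clip {p : (Fin n → L) → L} (hp : IsLatticePolynomial p)
    (y : Fin n → L) :
    p (fun i => (p (fun _ => ⊥) ⊔ y i) ⊓ p (fun _ => ⊤)) = p y := by
  set A := p (fun _ => ⊥) with hA
  set B := p (fun _ => ⊤) with hBdef
  have hcA : ∀ S : Finset (Fin n), A ≤ p (fun i => if i ∈ S then (⊤ : L) else ⊥) := by
    intro S
    exact hp.monotone fun i => bot_le
  have hcB : ∀ S : Finset (Fin n), p (fun i => if i ∈ S then (⊤ : L) else ⊥) ≤ B := by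
    intro S
    exact hp.monotone fun i => le_top
  have h1 := hp.dnf (bot_le : (⊥ : L) ≤ ⊤) y (fun i => bot_le) (fun i => le_top)
  have h2 := hp.dnf (bot_le : (⊥ : L) ≤ ⊤) (fun i => (A ⊔ y i) ⊓ B)
    (fun i => bot_le) (fun i => le_top)
  rw [h1, h2]
  apply le_antisymm
  · apply Finset.sup_le; intro S _
    have step1 : S.inf (fun i => (A ⊔ y i) ⊓ B) ≤ A ⊔ S.inf y := by
      rw [Finset.inf_sup_distrib_left]
      exact Finset.inf_mono_fun fun i _ => inf_le_left
    refine le_trans (inf_le_inf le_rfl step1) ?_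
    rw [inf_sup_left]
    refine sup_le ?_ ?_
    · refine le_trans inf_le_right ?_
      refine le_trans ?_ (Finset.le_sup (Finset.mem_univ (∅ : Finset (Fin n))))
      simp [← hA]
    · exact Finset.le_sup
        (f := fun S => p (fun i => if i ∈ S then (⊤ : L) else ⊥) ⊓ S.inf y) (Finset.mem_univ S)
  · apply Finset.sup_le; intro S _
    refine le_trans ?_ (Finset.le_sup (Finset.mem_univ S))
    refine le_inf inf_le_left (Finset.le_inf fun i hi => le_inf ?_ ?_)
    · exact le_trans inf_le_right ((Finset.inf_le hi).trans le_sup_right)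
    · exact le_trans inf_le_left (hcB S)

theorem isLatticePolynomial_finsetInf (S : Finset (Fin n)) :
    IsLatticePolynomial (fun v : Fin n → L => S.inf v) := by
  classical
  induction S using Finset.induction_on with
  | empty => simp only [Finset.inf_empty]; exact .const ⊤
  | @insert a s ha ih => simp only [Finset.inf_insert]; exact .inf (.proj a) ih

theorem isLatticePolynomial_finsetSup {ι : Type*} (s : Finset ι) (F : ι → (Fin n → L) → L)
    (h : ∀ i ∈ s, IsLatticePolynomial (F i)) :
    IsLatticePolynomial (fun v => s.sup (fun i => F i v)) := by
  classical
  induction s using Finset.induction_on with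
  | empty => simp only [Finset.sup_empty]; exact .const ⊥
  | @insert a s ha ih =>
    simp only [Finset.sup_insert]
    exact .sup (h a (Finset.mem_insert_self a s))
      (ih fun i hi => h i (Finset.mem_insert_of_mem hi))

/-- A binary lattice homomorphism transports polynomials. -/
theorem exists_push {X Y : Type*} [DistribLattice X] [BoundedOrder X] [DistribLattice Y]
    [BoundedOrder Y] {m : ℕ} (δ : X → Y)
    (hm : ∀ a b : X, δ (a ⊓ b) = δ a ⊓ δ b) (hj : ∀ a b : X, δ (a ⊔ b) = δ a ⊔ δ b)
    {p : (Fin m → X) → X} (hp : IsLatticePolynomial p) :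
    ∃ q : (Fin m → Y) → Y, IsLatticePolynomial q ∧ ∀ v, δ (p v) = q (fun i => δ (v i)) := by
  induction hp with
  | proj i => exact ⟨fun x => x i, .proj i, fun v => rfl⟩
  | const c => exact ⟨fun _ => δ c, .const _, fun v => rfl⟩
  | inf h1 h2 ih1 ih2 =>
    obtain ⟨q1, hq1, he1⟩ := ih1
    obtain ⟨q2, hq2, he2⟩ := ih2
    exact ⟨fun x => q1 x ⊓ q2 x, .inf hq1 hq2, fun v => by rw [hm, he1, he2]⟩
  | sup h1 h2 ih1 ih2 =>
    obtain ⟨q1, hq1, he1⟩ := ih1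
    obtain ⟨q2, hq2, he2⟩ := ih2
    exact ⟨fun x => q1 x ⊔ q2 x, .sup hq1 hq2, fun v => by rw [hj, he1, he2]⟩

end Aux

theorem statement_14 {X Y : Type*} [DistribLattice X] [BoundedOrder X]
    [DistribLattice Y] [BoundedOrder Y] {n : ℕ} (hn : 0 < n)
    (f : (Fin n → X) → Y)
    (hhom : ∀ a b : X, f (fun _ => a ⊓ b) = f (fun _ => a) ⊓ f (fun _ => b) ∧
                       f (fun _ => a ⊔ b) = f (fun _ => a) ⊔ f (fun _ => b)) :
    IsTransformedPolynomial f ↔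
      (Set.range (fun x : X => f (fun _ => x)) = Set.range f ∧ IsQuasiPolynomial f) := by
  classical
  set δ : X → Y := fun x => f (fun _ => x) with hδ
  have hm : ∀ a b : X, δ (a ⊓ b) = δ a ⊓ δ b := fun a b => (hhom a b).1
  have hj : ∀ a b : X, δ (a ⊔ b) = δ a ⊔ δ b := fun a b => (hhom a b).2
  have hmono : Monotone δ := fun a b h => by
    have := hm a b
    rw [inf_eq_left.mpr h] at this
    rw [this]; exact inf_le_right
  constructor
  · rintro ⟨p, ψ, hp, hfp⟩
    have hfd : ∀ v, f (fun _ => p v) = f v := by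
      intro v
      have h1 : p (fun _ => p v) = p v := by
        rw [hp.diag (p v), sup_eq_right.mpr (hp.monotone fun i => bot_le),
          inf_eq_left.mpr (hp.monotone fun i => le_top)]
      rw [hfp]
      show ψ (p (fun _ => p v)) = ψ (p v)
      rw [h1]
    constructor
    · ext y
      simp only [Set.mem_range]
      constructor
      · rintro ⟨x, rfl⟩; exact ⟨fun _ => x, rfl⟩
      · rintro ⟨v, rfl⟩; exact ⟨p v, hfd v⟩
    · obtain ⟨q, hq, hqe⟩ := exists_push δ hm hj hp
      refine ⟨q, δ, hq, ?_, ?_⟩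
      · intro x
        have hb : δ ⊥ ≤ δ x := hmono bot_le
        have ht : δ x ≤ δ ⊤ := hmono le_top
        have hbt : δ ⊥ ≤ δ ⊤ := hmono bot_le
        rw [med, inf_eq_left.mpr hb, inf_eq_left.mpr ht, inf_eq_right.mpr hbt,
          sup_eq_right.mpr hb, sup_eq_left.mpr hb]
      · intro v
        rw [← hqe v]
        exact (hfd v).symm
  · rintro ⟨hrange, p, φ, hp, hφ, hf⟩
    have hdiagφ : ∀ x, δ x = (p (fun _ => ⊥) ⊔ φ x) ⊓ p (fun _ => ⊤) := by
      intro x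
      have : δ x = p (fun _ => φ x) := hf (fun _ => x)
      rw [this, hp.diag (φ x)]
    have hB : ∀ v, f v = p (fun i => δ (v i)) := by
      intro v
      rw [hf v, ← hp.clip (fun i => φ (v i))]
      congr 1
      funext i
      exact (hdiagφ (v i)).symm
    have hC : ∀ v, f v = (Finset.univ : Finset (Finset (Fin n))).sup
        (fun S => p (fun i => if i ∈ S then δ ⊤ else δ ⊥) ⊓ S.inf (fun i => δ (v i))) := by
      intro v
      rw [hB v]
      exact hp.dnf (hmono bot_le) (fun i => δ (v i))
        (fun i => hmono bot_le) (fun i => hmono le_top)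
    have hCoef : ∀ S : Finset (Fin n), p (fun i => if i ∈ S then δ ⊤ else δ ⊥)
        = f (fun i => if i ∈ S then ⊤ else ⊥) := by
      intro S
      rw [hB (fun i => if i ∈ S then ⊤ else ⊥)]
      congr 1
      funext i
      by_cases h : i ∈ S <;> simp [h]
    have hk : ∀ S : Finset (Fin n), ∃ x : X, δ x = f (fun i => if i ∈ S then ⊤ else ⊥) := by
      intro S
      have h1 : f (fun i => if i ∈ S then (⊤ : X) else ⊥) ∈ Set.range f := Set.mem_range_self _
      rw [← hrange] at h1
      obtain ⟨x, hx⟩ := h1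
      exact ⟨x, hx⟩
    choose k hkk using hk
    refine ⟨fun v => (Finset.univ : Finset (Finset (Fin n))).sup (fun S => k S ⊓ S.inf v),
      δ, ?_, ?_⟩
    · exact isLatticePolynomial_finsetSup _ _
        (fun S _ => .inf (.const (k S)) (isLatticePolynomial_finsetInf S))
    · funext v
      show f v = δ ((Finset.univ : Finset (Finset (Fin n))).sup (fun S => k S ⊓ S.inf v))
      have hne : (Finset.univ : Finset (Finset (Fin n))).Nonempty := ⟨∅, Finset.mem_univ _⟩
      have hterm : ∀ S : Finset (Fin n), δ (k S ⊓ S.inf v)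
          = p (fun i => if i ∈ S then δ ⊤ else δ ⊥) ⊓ S.inf (fun i => δ (v i)) := by
        intro S
        rw [hCoef S]
        rcases S.eq_empty_or_nonempty with h | h
        · subst h
          simp only [Finset.inf_empty, inf_top_eq]
          exact hkk ∅
        · rw [← Finset.inf'_eq_inf h v, ← Finset.inf'_eq_inf h (fun i => δ (v i)),
            hm, hkk S, Finset.apply_inf'_eq_inf'_comp h δ hm]
          rfl
      rw [← Finset.sup'_eq_sup hne, Finset.comp_sup'_eq_sup'_comp hne δ hj, hC v,
        ← Finset.sup'_eq_sup hne]
      exact Finset.sup'_congr hne rfl (fun S _ => (hterm S).symm)
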